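/- Let n ≥ 2 and let 𝓛_I be the GKSL superoperator 𝓛_I(ρ) = −i[H, ρ] + Σ_j (L_j ρ L_j† − ½{L_j† L_j, ρ}) on n×n complex matrices, where H is Hermitian and Tr L_j = 0 for all j. Then 𝔓(𝓛_I ∘ 𝓛_I) − 𝔓(𝓛_I) ∘ 𝔓(𝓛_I) = c·(𝓘 − (I/n)·Tr(·)), where c = (n²/(n²−1))·(−2(⟨H²⟩ − ⟨H⟩²) + Σ_{j,k} |⟨L_j L_k⟩|² + ½⟨G²⟩ + ½⟨G⟩²) − (n⁴/(n²−1)²)·⟨G⟩², with G = Σ_j L_j† L_j and ⟨A⟩ = Tr A / n. -/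

import Mathlib

open Matrix

/-- The superoperator `X ↦ (Tr X) • I` on `n × n` complex matrices. -/
noncomputable def traceMap (n : ℕ) :
    Matrix (Fin n) (Fin n) ℂ →ₗ[ℂ] Matrix (Fin n) (Fin n) ℂ :=
  (LinearMap.toSpanSingleton ℂ _ (1 : Matrix (Fin n) (Fin n) ℂ)).comp
    (Matrix.traceLinearMap (Fin n) ℂ ℂ)

/-- The depolarizing superoperator `Λ_p : X ↦ p • X + (1 - p) • (Tr X / n) • I`. -/
noncomputable def depol (n : ℕ) (p : ℂ) :
    Matrix (Fin n) (Fin n) ℂ →ₗ[ℂ] Matrix (Fin n) (Fin n) ℂ :=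
  p • LinearMap.id + ((1 - p) / (n : ℂ)) • traceMap n

/-- The superoperator trace `tr Φ = Σ_{k,m} (Φ E_{km})_{km}`. -/
noncomputable def supertrace (n : ℕ)
    (Φ : Matrix (Fin n) (Fin n) ℂ →ₗ[ℂ] Matrix (Fin n) (Fin n) ℂ) : ℂ :=
  ∑ k : Fin n, ∑ m : Fin n, (Φ (Matrix.single k m 1)) k m

/-- The twirling hyperprojector with respect to the full unitary group. -/
noncomputable def twirl (n : ℕ)
    (Φ : Matrix (Fin n) (Fin n) ℂ →ₗ[ℂ] Matrix (Fin n) (Fin n) ℂ) :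
    Matrix (Fin n) (Fin n) ℂ →ₗ[ℂ] Matrix (Fin n) (Fin n) ℂ :=
  ((((n : ℂ) * Matrix.trace (Φ 1) - supertrace n Φ) / ((n : ℂ) * ((n : ℂ) ^ 2 - 1))) •
      traceMap n) +
    ((((n : ℂ) * supertrace n Φ - Matrix.trace (Φ 1)) / ((n : ℂ) * ((n : ℂ) ^ 2 - 1))) •
      LinearMap.id)

/-- The average with respect to the chaotic state: `⟨A⟩ = Tr A / n`. -/
noncomputable def avg (n : ℕ) (A : Matrix (Fin n) (Fin n) ℂ) : ℂ :=
  Matrix.trace A / (n : ℂ)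

/-- The GKSL superoperator `ρ ↦ −i[H, ρ] + Σ_j (L_j ρ L_j† − ½{L_j† L_j, ρ})`. -/
noncomputable def gksl {n m : ℕ} (H : Matrix (Fin n) (Fin n) ℂ)
    (L : Fin m → Matrix (Fin n) (Fin n) ℂ) :
    Matrix (Fin n) (Fin n) ℂ →ₗ[ℂ] Matrix (Fin n) (Fin n) ℂ :=
  (-Complex.I) • (LinearMap.mulLeft ℂ H - LinearMap.mulRight ℂ H) +
    ∑ j, (LinearMap.mulRight ℂ (L j)ᴴ ∘ₗ LinearMap.mulLeft ℂ (L j) -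
      (1 / 2 : ℂ) • (LinearMap.mulLeft ℂ ((L j)ᴴ * L j) +
        LinearMap.mulRight ℂ ((L j)ᴴ * L j)))

-- Auxiliary lemmas

noncomputable def sw (n : ℕ) (A B : Matrix (Fin n) (Fin n) ℂ) :
    Matrix (Fin n) (Fin n) ℂ →ₗ[ℂ] Matrix (Fin n) (Fin n) ℂ :=
  LinearMap.mulRight ℂ B ∘ₗ LinearMap.mulLeft ℂ A

lemma sw_apply {n : ℕ} (A B X : Matrix (Fin n) (Fin n) ℂ) : sw n A B X = A * X * B := rfl

lemma sw_comp {n : ℕ} (A B C D : Matrix (Fin n) (Fin n) ℂ) :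
    sw n A B ∘ₗ sw n C D = sw n (A * C) (D * B) := by
  ext X; simp [sw_apply, mul_assoc]

lemma lcomp_sum {n : ℕ} {ι : Type*} (s : Finset ι) (g : Matrix (Fin n) (Fin n) ℂ →ₗ[ℂ] Matrix (Fin n) (Fin n) ℂ)
    (f : ι → Matrix (Fin n) (Fin n) ℂ →ₗ[ℂ] Matrix (Fin n) (Fin n) ℂ) :
    g ∘ₗ (∑ i ∈ s, f i) = ∑ i ∈ s, g ∘ₗ f i := by
  ext X; simp

lemma sum_lcomp {n : ℕ} {ι : Type*} (s : Finset ι) (g : Matrix (Fin n) (Fin n) ℂ →ₗ[ℂ] Matrix (Fin n) (Fin n) ℂ)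
    (f : ι → Matrix (Fin n) (Fin n) ℂ →ₗ[ℂ] Matrix (Fin n) (Fin n) ℂ) :
    (∑ i ∈ s, f i) ∘ₗ g = ∑ i ∈ s, f i ∘ₗ g := by
  ext X; simp

noncomputable def stL (n : ℕ) :
    (Matrix (Fin n) (Fin n) ℂ →ₗ[ℂ] Matrix (Fin n) (Fin n) ℂ) →ₗ[ℂ] ℂ where
  toFun Φ := supertrace n Φ
  map_add' Φ Ψ := by simp [supertrace, Finset.sum_add_distrib]
  map_smul' c Φ := by simp [supertrace, Finset.mul_sum]

lemma st_eq (n : ℕ) (Φ) : supertrace n Φ = stL n Φ := rfl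

lemma st_sw {n : ℕ} (A B : Matrix (Fin n) (Fin n) ℂ) :
    supertrace n (sw n A B) = A.trace * B.trace := by
  have h : ∀ k m : Fin n, (A * Matrix.single k m (1:ℂ) * B) k m = A k k * B m m := by
    intro k m
    simp [Matrix.mul_apply, Matrix.single, ite_and, Finset.sum_mul, mul_ite,
      Finset.mul_sum]
  simp only [supertrace, sw_apply, h, Matrix.trace, Matrix.diag, Finset.sum_mul, Finset.mul_sum]
  rw [Finset.sum_comm]

lemma gksl_eq {n m : ℕ} (H : Matrix (Fin n) (Fin n) ℂ)
    (L : Fin m → Matrix (Fin n) (Fin n) ℂ) :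
    gksl H L = sw n ((-Complex.I) • H - (1/2 : ℂ) • ∑ j, (L j)ᴴ * L j) 1
      + sw n 1 (Complex.I • H - (1/2 : ℂ) • ∑ j, (L j)ᴴ * L j)
      + ∑ j, sw n (L j) (L j)ᴴ := by
  refine LinearMap.ext fun X => ?_
  simp only [gksl, sw_apply, LinearMap.add_apply, LinearMap.sum_apply, LinearMap.sub_apply,
    LinearMap.smul_apply, LinearMap.mulLeft_apply, LinearMap.mulRight_apply,
    LinearMap.comp_apply, Matrix.mul_one, Matrix.one_mul, Matrix.sub_mul, Matrix.mul_sub,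
    Matrix.smul_mul, Matrix.mul_smul, Finset.sum_mul, Finset.mul_sum, smul_sub, smul_add,
    Finset.sum_sub_distrib, Finset.sum_add_distrib, Finset.smul_sum]
  module

lemma trace_gksl_apply {n m : ℕ} (H : Matrix (Fin n) (Fin n) ℂ)
    (L : Fin m → Matrix (Fin n) (Fin n) ℂ) (X : Matrix (Fin n) (Fin n) ℂ) :
    (gksl H L X).trace = 0 := by
  rw [gksl_eq]
  have h2 : ∀ j, (L j * X * (L j)ᴴ).trace = ((L j)ᴴ * L j * X).trace := fun j =>
    Matrix.trace_mul_cycle (L j) X (L j)ᴴ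
  simp only [LinearMap.add_apply, LinearMap.sum_apply, sw_apply, Matrix.mul_one,
    Matrix.one_mul, Matrix.trace_add, Matrix.trace_sum, h2, Matrix.sub_mul, Matrix.mul_sub,
    Matrix.smul_mul, Matrix.mul_smul, Matrix.trace_sub, Matrix.trace_smul, Finset.sum_mul,
    Matrix.trace_mul_comm X, smul_eq_mul]
  ring_nf

lemma st_gksl {n m : ℕ} (H : Matrix (Fin n) (Fin n) ℂ)
    (L : Fin m → Matrix (Fin n) (Fin n) ℂ) (hL : ∀ j, Matrix.trace (L j) = 0) :
    supertrace n (gksl H L) = -(n : ℂ) * (∑ j, (L j)ᴴ * L j).trace := by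
  rw [gksl_eq, st_eq, map_add, map_add, map_sum]
  simp only [← st_eq, st_sw, Matrix.trace_one, Matrix.trace_sub, Matrix.trace_smul,
    Matrix.trace_conjTranspose, hL, star_zero, mul_zero, zero_mul, Finset.sum_const_zero,
    smul_eq_mul, Fintype.card_fin]
  ring

lemma st_gksl_sq {n m : ℕ} (H : Matrix (Fin n) (Fin n) ℂ)
    (L : Fin m → Matrix (Fin n) (Fin n) ℂ) (hL : ∀ j, Matrix.trace (L j) = 0) :
    supertrace n (gksl H L ∘ₗ gksl H L) =
      -2 * (n : ℂ) * (H * H).trace + 2 * H.trace ^ 2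
      + (∑ j, ∑ k, (L j * L k).trace * star ((L j * L k).trace))
      + ((n : ℂ) / 2) * ((∑ j, (L j)ᴴ * L j) * (∑ j, (L j)ᴴ * L j)).trace
      + (1 / 2) * ((∑ j, (L j)ᴴ * L j).trace) ^ 2 := by
  set G : Matrix (Fin n) (Fin n) ℂ := ∑ j, (L j)ᴴ * L j with hG
  set P : Matrix (Fin n) (Fin n) ℂ := (-Complex.I) • H - (1/2 : ℂ) • G with hP
  set Q : Matrix (Fin n) (Fin n) ℂ := Complex.I • H - (1/2 : ℂ) • G with hQ
  rw [gksl_eq]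
  rw [show sw n P 1 + sw n 1 Q + ∑ j, sw n (L j) (L j)ᴴ = sw n P 1 + sw n 1 Q + ∑ j, sw n (L j) (L j)ᴴ from rfl]
  simp only [LinearMap.add_comp, LinearMap.comp_add, sum_lcomp, lcomp_sum, sw_comp,
    st_eq, map_add, map_sum]
  simp only [← st_eq, st_sw]
  have hLj : ∀ j, ((L j)ᴴ).trace = 0 := fun j => by
    rw [Matrix.trace_conjTranspose, hL, star_zero]
  have htr : ∀ j k, ((L k)ᴴ * (L j)ᴴ).trace = star ((L j * L k).trace) := fun j k => by
    rw [← Matrix.conjTranspose_mul, Matrix.trace_conjTranspose]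
  simp only [Matrix.mul_one, Matrix.one_mul, hL, hLj, htr, mul_zero, zero_mul,
    Finset.sum_const_zero, Matrix.trace_one, add_zero, zero_add]
  -- now expand traces of P, Q products
  have hPQ : P.trace * Q.trace + Q.trace * P.trace = 2 * H.trace^2 + (1/2) * G.trace^2 -
      Complex.I * H.trace * G.trace + Complex.I * H.trace * G.trace := by
    simp only [hP, hQ, Matrix.trace_sub, Matrix.trace_smul, smul_eq_mul]
    ring_nf
    rw [Complex.I_sq]
    ring
  have hP2 : (P * P).trace + (Q * Q).trace = -2 * (H*H).trace + (1/2) * (G*G).trace := by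
    simp only [hP, hQ, Matrix.sub_mul, Matrix.mul_sub, Matrix.smul_mul, Matrix.mul_smul,
      Matrix.trace_sub, Matrix.trace_smul, smul_smul, smul_eq_mul]
    rw [Matrix.trace_mul_comm G H]
    ring_nf
    rw [Complex.I_sq]
    ring
  have hsum : (∑ x : Fin m, ∑ y : Fin m, (L y * L x).trace * star ((L y * L x).trace))
      = ∑ j, ∑ k, (L j * L k).trace * star ((L j * L k).trace) := by rw [Finset.sum_comm]
  simp only [Fintype.card_fin]
  linear_combination (n:ℂ) * hP2 + hPQ + hsum

lemma traceMap_apply {n : ℕ} (X : Matrix (Fin n) (Fin n) ℂ) :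
    traceMap n X = X.trace • 1 := rfl

lemma comp_combo {n : ℕ} (a b c d : ℂ) :
    (a • traceMap n + b • LinearMap.id) ∘ₗ (c • traceMap n + d • LinearMap.id) =
      (a * c * (n : ℂ) + a * d + b * c) • traceMap n + (b * d) • LinearMap.id := by
  refine LinearMap.ext fun X => ?_
  simp only [LinearMap.add_apply, LinearMap.comp_apply, LinearMap.smul_apply, LinearMap.id_apply,
    traceMap_apply, map_add, _root_.map_smul, Matrix.trace_smul, Matrix.trace_one, smul_smul,
    smul_eq_mul, Fintype.card_fin, smul_add]
  module

lemma combo_sub {n : ℕ} (a b c d e : ℂ) (h1 : a - c = -(e * (n : ℂ)⁻¹)) (h2 : b - d = e) :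
    (a • traceMap n + b • LinearMap.id) - (c • traceMap n + d • LinearMap.id) =
      e • (LinearMap.id - ((n : ℂ))⁻¹ • traceMap n) := by
  have h3 : a = c - e * (n : ℂ)⁻¹ := by linear_combination h1
  have h4 : b = d + e := by linear_combination h2
  rw [h3, h4]
  module


lemma scalar2 (x y g h h2 g2 S : ℂ) (hx : x ≠ 0) (hy : y ≠ 0) :
  (x * (-2 * x * h2 + 2 * h ^ 2 + S + x / 2 * g2 + 1 / 2 * g ^ 2) - 0) / (x * y) -
      (x * (-x * g) - 0) / (x * y) * ((x * (-x * g) - 0) / (x * y)) =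
    x ^ 2 / y *
        (-2 * (h2 / x - (h / x) ^ 2) + S / x ^ 2 + 1 / 2 * (g2 / x) + 1 / 2 * (g / x) ^ 2) -
      x ^ 4 / y ^ 2 * (g / x) ^ 2 := by
  set T : ℂ := -2 * x * h2 + 2 * h ^ 2 + S + x / 2 * g2 + 1 / 2 * g ^ 2 with hT
  have h1 : (x * T - 0) / (x * y) = T / y := by rw [sub_zero, mul_div_mul_left _ _ hx]
  have h2' : (x * (-x * g) - 0) / (x * y) = -(x * g) / y := by
    rw [sub_zero, show x * (-x * g) = x * (-(x * g)) from by ring, mul_div_mul_left _ _ hx]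
  have h3 : x ^ 2 / y *
      (-2 * (h2 / x - (h / x) ^ 2) + S / x ^ 2 + 1 / 2 * (g2 / x) + 1 / 2 * (g / x) ^ 2)
      = T / y := by
    rw [div_mul_eq_mul_div]
    congr 1
    rw [hT]
    linear_combination (-2*x*h2 + x/2*g2 + (x*x⁻¹+1)*(2*h^2+S+1/2*g^2)) * (mul_inv_cancel₀ hx)
  have h4 : x ^ 4 / y ^ 2 * (g / x) ^ 2 = (x * g) ^ 2 / y ^ 2 := by
    rw [div_pow, div_mul_div_comm]
    rw [div_eq_div_iff (mul_ne_zero (pow_ne_zero _ hy) (pow_ne_zero _ hx)) (pow_ne_zero _ hy)]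
    ring
  have h5 : -(x * g) / y * (-(x * g) / y) = (x * g) ^ 2 / y ^ 2 := by
    rw [div_mul_div_comm]; congr 1 <;> ring
  rw [h1, h2', h3, h4, h5]

lemma scalar1 (x y g h h2 g2 S : ℂ) (hx : x ≠ 0) (hy : y ≠ 0) :
  (x * 0 - (-2 * x * h2 + 2 * h ^ 2 + S + x / 2 * g2 + 1 / 2 * g ^ 2)) / (x * y) -
      ((x * 0 - -x * g) / (x * y) * ((x * 0 - -x * g) / (x * y)) * x +
          (x * 0 - -x * g) / (x * y) * ((x * (-x * g) - 0) / (x * y)) +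
        (x * (-x * g) - 0) / (x * y) * ((x * 0 - -x * g) / (x * y))) =
    -((x ^ 2 / y *
            (-2 * (h2 / x - (h / x) ^ 2) + S / x ^ 2 + 1 / 2 * (g2 / x) + 1 / 2 * (g / x) ^ 2) -
          x ^ 4 / y ^ 2 * (g / x) ^ 2) * x⁻¹) := by
  set T : ℂ := -2 * x * h2 + 2 * h ^ 2 + S + x / 2 * g2 + 1 / 2 * g ^ 2 with hT
  have hA : (x * 0 - -x * g) / (x * y) = g / y := by
    rw [show x * 0 - -x * g = x * g from by ring, mul_div_mul_left _ _ hx]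
  have hB : (x * (-x * g) - 0) / (x * y) = -(x * g) / y := by
    rw [sub_zero, show x * (-x * g) = x * (-(x * g)) from by ring, mul_div_mul_left _ _ hx]
  have h3 : x ^ 2 / y *
      (-2 * (h2 / x - (h / x) ^ 2) + S / x ^ 2 + 1 / 2 * (g2 / x) + 1 / 2 * (g / x) ^ 2)
      = T / y := by
    rw [div_mul_eq_mul_div]
    congr 1
    rw [hT]
    linear_combination (-2*x*h2 + x/2*g2 + (x*x⁻¹+1)*(2*h^2+S+1/2*g^2)) * (mul_inv_cancel₀ hx)
  have h4 : x ^ 4 / y ^ 2 * (g / x) ^ 2 = (x * g) ^ 2 / y ^ 2 := by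
    rw [div_pow, div_mul_div_comm]
    rw [div_eq_div_iff (mul_ne_zero (pow_ne_zero _ hy) (pow_ne_zero _ hx)) (pow_ne_zero _ hy)]
    ring
  rw [hA, hB, h3, h4]
  have hxy : x * y ≠ 0 := mul_ne_zero hx hy
  have hy2 : (y:ℂ)^2 ≠ 0 := pow_ne_zero _ hy
  field_simp
  ring

/-- `𝔓(𝓛_I²) − 𝔓(𝓛_I)² = c (𝓘 − (I/n) Tr(·))` where
`c = (n²/(n²−1))(−2(⟨H²⟩ − ⟨H⟩²) + Σ_{j,k}|⟨L_j L_k⟩|² + ½⟨G²⟩ + ½⟨G⟩²) − (n⁴/(n²−1)²)⟨G⟩²`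
with `G = Σ_j L_j† L_j`. -/
theorem twirl_gksl_sq_sub_sq (n m : ℕ) (hn : 2 ≤ n)
    (H : Matrix (Fin n) (Fin n) ℂ) (hH : H.IsHermitian)
    (L : Fin m → Matrix (Fin n) (Fin n) ℂ) (hL : ∀ j, Matrix.trace (L j) = 0) :
    twirl n (gksl H L ∘ₗ gksl H L) - twirl n (gksl H L) ∘ₗ twirl n (gksl H L) =
      (((n : ℂ) ^ 2 / ((n : ℂ) ^ 2 - 1)) *
          (-2 * (avg n (H * H) - (avg n H) ^ 2) +
            (∑ j, ∑ k, ((‖avg n (L j * L k)‖ : ℝ) : ℂ) ^ 2) +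
            (1 / 2 : ℂ) * avg n ((∑ j, (L j)ᴴ * L j) * (∑ j, (L j)ᴴ * L j)) +
            (1 / 2 : ℂ) * (avg n (∑ j, (L j)ᴴ * L j)) ^ 2) -
        ((n : ℂ) ^ 4 / ((n : ℂ) ^ 2 - 1) ^ 2) * (avg n (∑ j, (L j)ᴴ * L j)) ^ 2) •
        (LinearMap.id - ((n : ℂ))⁻¹ • traceMap n) := by
  have hn0 : (n : ℂ) ≠ 0 := Nat.cast_ne_zero.mpr (by omega)
  have hne : ((n : ℂ) ^ 2 - 1) ≠ 0 := by
    have h9 : ((n ^ 2 : ℕ) : ℂ) ≠ ((1 : ℕ) : ℂ) := by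
      rw [Ne, Nat.cast_inj]; nlinarith
    push_cast at h9
    exact fun h => h9 (by rwa [sub_eq_zero] at h)
  have hK1 : Matrix.trace ((gksl H L) 1) = 0 := trace_gksl_apply H L 1
  have hKK1 : Matrix.trace ((gksl H L ∘ₗ gksl H L) 1) = 0 := by
    rw [LinearMap.comp_apply]; exact trace_gksl_apply H L _
  have habs : (∑ j, ∑ k, ((‖avg n (L j * L k)‖ : ℝ) : ℂ) ^ 2) =
      (∑ j, ∑ k, (L j * L k).trace * star ((L j * L k).trace)) / (n : ℂ) ^ 2 := by
    rw [Finset.sum_div]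
    refine Finset.sum_congr rfl fun j _ => ?_
    rw [Finset.sum_div]
    refine Finset.sum_congr rfl fun k _ => ?_
    rw [← Complex.ofReal_pow, Complex.sq_norm, Complex.normSq_eq_conj_mul_self, avg]
    rw [map_div₀]
    simp only [Complex.conj_natCast, RCLike.star_def]
    field_simp
  rw [twirl, twirl, hK1, hKK1, st_gksl H L hL, st_gksl_sq H L hL, comp_combo, habs]
  simp only [avg]
  set S : ℂ := ∑ j, ∑ k, (L j * L k).trace * star ((L j * L k).trace) with hS
  set g : ℂ := (∑ j, (L j)ᴴ * L j).trace with hg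
  set g2 : ℂ := ((∑ j, (L j)ᴴ * L j) * (∑ j, (L j)ᴴ * L j)).trace with hg2
  set h : ℂ := H.trace with hh
  set h2 : ℂ := (H * H).trace with hh2
  exact combo_sub _ _ _ _ _ (scalar1 (n : ℂ) ((n : ℂ) ^ 2 - 1) g h h2 g2 S hn0 hne)
    (scalar2 (n : ℂ) ((n : ℂ) ^ 2 - 1) g h h2 g2 S hn0 hne)
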